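/- arXiv:2107.01173 — 3 statements merged into one kernel-verified Lean document; each statement's English description precedes it below -/
import Mathlib

section
/- Variance recursion for moving-average estimators (Lemma 3). Let h : ℝ^d → ℝ^k be C-Lipschitz, let β ∈ (0,1], let w, w' ∈ ℝ^d and m₀ ∈ ℝ^k be fixed, and let X be an ℝ^k-valued random vector on a probability space with E[X] = h(w) and E[‖X‖²] < ∞. Define M₁ = (1−β)m₀ + βX. Then E[‖M₁ − h(w)‖²] ≤ (1−β)‖m₀ − h(w')‖² + β² E[‖X − h(w)‖²] + (2C²/β)‖w − w'‖². -/
/-!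
Since `M₁ - h w = (1 - β) • (m₀ - h w) + β • (X - h w)` with the second summand centred, the
mean squared error splits into the squared bias `(1 - β)² ‖m₀ - h w‖²` plus `β²` times the
variance of `X`. The triangle inequality and the Lipschitz bound move the bias from `h w` to
`h w'`, and Young's inequality with weights `1 - β`, `β` absorbs the cross term this creates.
-/

open MeasureTheory

theorem integral_norm_add_sq_of_integral_eq_zero {Ω E : Type*} [MeasurableSpace Ω]
    {μ : Measure Ω} [IsProbabilityMeasure μ] [NormedAddCommGroup E] [InnerProductSpace ℝ E]
    [CompleteSpace E] {Y : Ω → E} (hY : MemLp Y 2 μ) (hY₀ : ∫ ω, Y ω ∂μ = 0) (c : E) :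
    ∫ ω, ‖c + Y ω‖ ^ 2 ∂μ = ‖c‖ ^ 2 + ∫ ω, ‖Y ω‖ ^ 2 ∂μ := by
  have hYint : Integrable Y μ := hY.integrable one_le_two
  have hcross : Integrable (fun ω => 2 * inner ℝ c (Y ω)) μ := (hYint.const_inner c).const_mul 2
  simp_rw [norm_add_sq_real]
  rw [integral_add (f := fun ω => ‖c‖ ^ 2 + 2 * inner ℝ c (Y ω))
      ((integrable_const _).add hcross) hY.integrable_norm_pow',
    integral_add (integrable_const _) hcross, integral_const_mul, integral_inner hYint, hY₀]
  simp

/-- Young's inequality `(s + r)² ≤ s² / (1 - β) + r² / β` multiplied by `(1 - β)²`, a form that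
remains valid at `β = 1`. -/
theorem one_sub_sq_mul_add_sq_le {β : ℝ} (hβ₀ : 0 < β) (hβ₁ : β ≤ 1) (s r : ℝ) :
    (1 - β) ^ 2 * (s + r) ^ 2 ≤ (1 - β) * s ^ 2 + r ^ 2 / β := by
  have hAMGM : 0 ≤ (1 - β) * (β * s - (1 - β) * r) ^ 2 :=
    mul_nonneg (by linarith) (sq_nonneg _)
  have hcoef : 0 ≤ r ^ 2 * (1 - (1 - β) ^ 2) := mul_nonneg (sq_nonneg r) (by nlinarith)
  rw [← sub_le_iff_le_add', le_div_iff₀ hβ₀]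
  nlinarith

theorem variance_recursion_general
    (d k : ℕ) (C : ℝ)
    (h : EuclideanSpace ℝ (Fin d) → EuclideanSpace ℝ (Fin k))
    (hlip : ∀ x y, ‖h x - h y‖ ≤ C * ‖x - y‖)
    (β : ℝ) (hβ : β ∈ Set.Ioc (0 : ℝ) 1)
    (w w' : EuclideanSpace ℝ (Fin d)) (m₀ : EuclideanSpace ℝ (Fin k))
    (Ω₀ : Type*) [MeasurableSpace Ω₀] (μ : Measure Ω₀) [IsProbabilityMeasure μ]
    (X : Ω₀ → EuclideanSpace ℝ (Fin k))
    (hXint : Integrable X μ)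
    (hXmean : ∫ ω, X ω ∂μ = h w)
    (hX2 : Integrable (fun ω => ‖X ω‖ ^ 2) μ) :
    ∫ ω, ‖((1 - β) • m₀ + β • X ω) - h w‖ ^ 2 ∂μ
      ≤ (1 - β) * ‖m₀ - h w'‖ ^ 2 + β ^ 2 * ∫ ω, ‖X ω - h w‖ ^ 2 ∂μ
        + (2 * C ^ 2 / β) * ‖w - w'‖ ^ 2 := by
  obtain ⟨hβ₀, hβ₁⟩ := hβ
  have hX : MemLp X 2 μ := (memLp_two_iff_integrable_sq_norm hXint.1).2 hX2
  have hY : MemLp (fun ω => β • (X ω - h w)) 2 μ := (hX.sub (memLp_const _)).const_smul β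
  have hY₀ : ∫ ω, β • (X ω - h w) ∂μ = 0 := by
    rw [integral_smul, integral_sub hXint (integrable_const _), hXmean]
    simp
  have hsplit : ∀ ω, (1 - β) • m₀ + β • X ω - h w = (1 - β) • (m₀ - h w) + β • (X ω - h w) :=
    fun ω => by module
  have hbias : ‖m₀ - h w‖ ≤ ‖m₀ - h w'‖ + C * ‖w - w'‖ :=
    calc ‖m₀ - h w‖ ≤ ‖m₀ - h w'‖ + ‖h w' - h w‖ := norm_sub_le_norm_sub_add_norm_sub _ _ _
      _ ≤ ‖m₀ - h w'‖ + C * ‖w - w'‖ := by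
        rw [norm_sub_rev (h w')]; gcongr; exact hlip w w'
  simp_rw [hsplit, integral_norm_add_sq_of_integral_eq_zero hY hY₀, norm_smul, mul_pow,
    Real.norm_eq_abs, sq_abs, integral_const_mul]
  have hbias_sq : (1 - β) ^ 2 * ‖m₀ - h w‖ ^ 2
      ≤ (1 - β) * ‖m₀ - h w'‖ ^ 2 + (C * ‖w - w'‖) ^ 2 / β :=
    calc (1 - β) ^ 2 * ‖m₀ - h w‖ ^ 2 ≤ (1 - β) ^ 2 * (‖m₀ - h w'‖ + C * ‖w - w'‖) ^ 2 := by
          gcongr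
      _ ≤ _ := one_sub_sq_mul_add_sq_le hβ₀ hβ₁ _ _
  have hslack : 0 ≤ (C * ‖w - w'‖) ^ 2 / β := by positivity
  linarith [show 2 * C ^ 2 / β * ‖w - w'‖ ^ 2 = 2 * ((C * ‖w - w'‖) ^ 2 / β) by ring]

/-- Variance recursion for moving-average estimators (Lemma 3). -/
theorem variance_recursion
    (d k : ℕ) (C : ℝ) (hC : 0 ≤ C)
    (h : EuclideanSpace ℝ (Fin d) → EuclideanSpace ℝ (Fin k))
    (hlip : ∀ x y, ‖h x - h y‖ ≤ C * ‖x - y‖)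
    (β : ℝ) (hβ : β ∈ Set.Ioc (0 : ℝ) 1)
    (w w' : EuclideanSpace ℝ (Fin d)) (m₀ : EuclideanSpace ℝ (Fin k))
    (Ω₀ : Type*) [MeasurableSpace Ω₀] (μ : Measure Ω₀) [IsProbabilityMeasure μ]
    (X : Ω₀ → EuclideanSpace ℝ (Fin k))
    (hXint : Integrable X μ)
    (hXmean : ∫ ω, X ω ∂μ = h w)
    (hX2 : Integrable (fun ω => ‖X ω‖ ^ 2) μ) :
    ∫ ω, ‖((1 - β) • m₀ + β • X ω) - h w‖ ^ 2 ∂μ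
      ≤ (1 - β) * ‖m₀ - h w'‖ ^ 2 + β ^ 2 * ∫ ω, ‖X ω - h w‖ ^ 2 ∂μ
        + (2 * C ^ 2 / β) * ‖w - w'‖ ^ 2 :=
  variance_recursion_general d k C h hlip β hβ w w' m₀ Ω₀ μ X hXint hXmean hX2
end

section
/- Projected variance recursion for moving-average estimators. Let S ⊆ ℝ^k be a nonempty closed convex set and Π_S the Euclidean projection onto S. Let h : ℝ^d → ℝ^k be C-Lipschitz with h(w) ∈ S, let β ∈ (0,1], let w, w' ∈ ℝ^d and m₀ ∈ ℝ^k be fixed, and let X be an ℝ^k-valued random vector with E[X] = h(w) and E[‖X‖²] < ∞. Define M₁ = Π_S[(1−β)m₀ + βX]. Then E[‖M₁ − h(w)‖²] ≤ (1−β)‖m₀ − h(w')‖² + β² E[‖X − h(w)‖²] + (2C²/β)‖w − w'‖². -/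
open MeasureTheory RealInnerProductSpace

set_option maxHeartbeats 1000000 in
private lemma proj_contract_aux (k : ℕ) (S : Set (EuclideanSpace ℝ (Fin k)))
    (hSconv : Convex ℝ S)
    (proj : EuclideanSpace ℝ (Fin k) → EuclideanSpace ℝ (Fin k))
    (hproj_mem : ∀ u, proj u ∈ S)
    (hproj_min : ∀ u, ∀ v ∈ S, ‖proj u - u‖ ≤ ‖v - u‖)
    (u c : EuclideanSpace ℝ (Fin k)) (hc : c ∈ S) :
    ‖proj u - c‖ ≤ ‖u - c‖ := by
  haveI : Nonempty S := ⟨⟨proj u, hproj_mem u⟩⟩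
  have hmin : ‖u - proj u‖ = ⨅ w : S, ‖u - w‖ := by
    apply le_antisymm
    · apply le_ciInf
      intro w
      rw [norm_sub_rev, norm_sub_rev u w]
      exact hproj_min u w w.2
    · have hbdd : BddBelow (Set.range fun w : S => ‖u - (w : EuclideanSpace ℝ (Fin k))‖) := by
        refine ⟨0, ?_⟩
        rintro x ⟨w, rfl⟩
        exact norm_nonneg _
      exact ciInf_le hbdd ⟨proj u, hproj_mem u⟩
  have hinner := (norm_eq_iInf_iff_real_inner_le_zero hSconv (hproj_mem u)).mp hmin c hc
  have h1 : ‖proj u - c‖^2 ≤ ⟪u - c, proj u - c⟫ := by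
    have hsplit : (proj u - u) + (u - c) = proj u - c := by abel
    have h2 : ⟪proj u - u, proj u - c⟫ ≤ 0 := by
      have hn1 : proj u - u = -(u - proj u) := by abel
      have hn2 : proj u - c = -(c - proj u) := by abel
      rw [hn1, hn2, inner_neg_neg]
      exact hinner
    have := real_inner_self_eq_norm_sq (proj u - c)
    nlinarith [congrArg (fun v => ⟪v, proj u - c⟫) hsplit, inner_add_left (𝕜 := ℝ)
      (proj u - u) (u - c) (proj u - c)]
  have h3 : ⟪u - c, proj u - c⟫ ≤ ‖u - c‖ * ‖proj u - c‖ := real_inner_le_norm _ _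
  nlinarith [norm_nonneg (proj u - c), norm_nonneg (u - c)]

private lemma scalar_aux (β y z : ℝ) (hβ0 : 0 < β) (hβ1 : β ≤ 1) :
    (1 - β)^2 * (y + z)^2 ≤ (1 - β) * y^2 + (2 / β) * z^2 := by
  have key : β * ((1-β)^2*(y+z)^2) ≤ β * ((1 - β) * y^2 + (2/β) * z^2) := by
    have h1 : β * ((2/β) * z^2) = 2 * z^2 := by field_simp
    have h2 : (0:ℝ) ≤ 2 - (1-β)^2 := by nlinarith
    rw [mul_add, h1]
    nlinarith [mul_nonneg (sub_nonneg.2 hβ1) (sq_nonneg (β*y - (1-β)*z)),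
      mul_nonneg h2 (sq_nonneg z)]
  exact le_of_mul_le_mul_left key hβ0

/-- Projected variance recursion for moving-average estimators.
The map `proj` is characterized as the Euclidean projection onto the nonempty
closed convex set `S`. -/
theorem projected_variance_recursion
    (d k : ℕ) (C : ℝ) (hC : 0 ≤ C)
    (S : Set (EuclideanSpace ℝ (Fin k)))
    (hS : S.Nonempty) (hSclosed : IsClosed S) (hSconv : Convex ℝ S)
    (proj : EuclideanSpace ℝ (Fin k) → EuclideanSpace ℝ (Fin k))
    (hproj_mem : ∀ u, proj u ∈ S)
    (hproj_min : ∀ u, ∀ v ∈ S, ‖proj u - u‖ ≤ ‖v - u‖)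
    (h : EuclideanSpace ℝ (Fin d) → EuclideanSpace ℝ (Fin k))
    (hlip : ∀ x y, ‖h x - h y‖ ≤ C * ‖x - y‖)
    (hmem : ∀ x, h x ∈ S)
    (β : ℝ) (hβ : β ∈ Set.Ioc (0 : ℝ) 1)
    (w w' : EuclideanSpace ℝ (Fin d)) (m₀ : EuclideanSpace ℝ (Fin k))
    (Ω₀ : Type*) [MeasurableSpace Ω₀] (μ : Measure Ω₀) [IsProbabilityMeasure μ]
    (X : Ω₀ → EuclideanSpace ℝ (Fin k))
    (hXint : Integrable X μ)
    (hXmean : ∫ ω, X ω ∂μ = h w)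
    (hX2 : Integrable (fun ω => ‖X ω‖ ^ 2) μ) :
    ∫ ω, ‖proj ((1 - β) • m₀ + β • X ω) - h w‖ ^ 2 ∂μ
      ≤ (1 - β) * ‖m₀ - h w'‖ ^ 2 + β ^ 2 * ∫ ω, ‖X ω - h w‖ ^ 2 ∂μ
        + (2 * C ^ 2 / β) * ‖w - w'‖ ^ 2 := by
  obtain ⟨hβ0, hβ1⟩ := hβ
  set c : EuclideanSpace ℝ (Fin k) := h w with hc
  set u : EuclideanSpace ℝ (Fin k) := (1 - β) • (m₀ - c) with hu
  -- integrability facts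
  have hXc : Integrable (fun ω => X ω - c) μ := hXint.sub (integrable_const c)
  have hsq : Integrable (fun ω => ‖X ω - c‖^2) μ := by
    have heq : (fun ω => ‖X ω - c‖^2)
        = fun ω => ‖X ω‖^2 - 2*⟪X ω, c⟫ + ‖c‖^2 := by
      funext ω; exact norm_sub_sq_real _ _
    rw [heq]
    exact (hX2.sub ((hXint.inner_const c).const_mul 2)).add (integrable_const _)
  have hinner : Integrable (fun ω => ⟪u, X ω - c⟫) μ := hXc.const_inner u
  -- zero-mean fact
  have hz : ∫ ω, (X ω - c) ∂μ = 0 := by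
    rw [integral_sub hXint (integrable_const c), hXmean, integral_const]
    simp [hc]
  -- pointwise expansion
  have hpoint : ∀ ω, ‖(1 - β) • m₀ + β • X ω - c‖^2
      = ‖u‖^2 + (2*β)*⟪u, X ω - c⟫ + β^2*‖X ω - c‖^2 := by
    intro ω
    have hdecomp : (1 - β) • m₀ + β • X ω - c = u + β • (X ω - c) := by
      rw [hu]; module
    have hns : ‖β • (X ω - c)‖^2 = β^2 * ‖X ω - c‖^2 := by
      rw [norm_smul, Real.norm_eq_abs, mul_pow, sq_abs]
    rw [hdecomp, norm_add_sq_real, real_inner_smul_right, hns]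
    ring
  have hgint : Integrable (fun ω => ‖u‖^2 + (2*β)*⟪u, X ω - c⟫ + β^2*‖X ω - c‖^2) μ :=
    ((integrable_const _).add (hinner.const_mul _)).add (hsq.const_mul _)
  -- step 1: projection contraction
  have step1 : ∫ ω, ‖proj ((1 - β) • m₀ + β • X ω) - c‖ ^ 2 ∂μ
      ≤ ∫ ω, ‖(1 - β) • m₀ + β • X ω - c‖ ^ 2 ∂μ := by
    apply integral_mono_of_nonneg
    · exact Filter.Eventually.of_forall fun ω => sq_nonneg _
    · have heq : (fun ω => ‖(1 - β) • m₀ + β • X ω - c‖ ^ 2)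
          = fun ω => ‖u‖^2 + (2*β)*⟪u, X ω - c⟫ + β^2*‖X ω - c‖^2 := funext hpoint
      rw [heq]; exact hgint
    · refine Filter.Eventually.of_forall fun ω => ?_
      have := proj_contract_aux k S hSconv proj hproj_mem hproj_min
        ((1 - β) • m₀ + β • X ω) c (hmem w)
      exact pow_le_pow_left₀ (norm_nonneg _) this 2
  -- step 2: compute the right integral
  have step2 : ∫ ω, ‖(1 - β) • m₀ + β • X ω - c‖ ^ 2 ∂μ
      = ‖u‖^2 + β^2 * ∫ ω, ‖X ω - c‖^2 ∂μ := by
    have heq : (fun ω => ‖(1 - β) • m₀ + β • X ω - c‖ ^ 2)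
        = fun ω => ‖u‖^2 + (2*β)*⟪u, X ω - c⟫ + β^2*‖X ω - c‖^2 := funext hpoint
    have e1 : ∫ ω, (‖u‖^2 + (2*β)*⟪u, X ω - c⟫ + β^2*‖X ω - c‖^2) ∂μ
        = (∫ ω, (‖u‖^2 + (2*β)*⟪u, X ω - c⟫) ∂μ) + ∫ ω, β^2*‖X ω - c‖^2 ∂μ :=
      integral_add ((integrable_const _).add (hinner.const_mul _)) (hsq.const_mul _)
    have e2 : ∫ ω, (‖u‖^2 + (2*β)*⟪u, X ω - c⟫) ∂μ
        = (∫ _ω, ‖u‖^2 ∂μ) + ∫ ω, (2*β)*⟪u, X ω - c⟫ ∂μ :=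
      integral_add (integrable_const _) (hinner.const_mul _)
    have e3 : ∫ ω, ⟪u, X ω - c⟫ ∂μ = (0:ℝ) := by
      rw [integral_inner hXc, hz, inner_zero_right]
    rw [heq, e1, e2, integral_const_mul, integral_const_mul, e3, integral_const]
    simp
  -- step 3: scalar bound on ‖u‖²
  have step3 : ‖u‖^2 ≤ (1 - β) * ‖m₀ - h w'‖ ^ 2 + (2 * C ^ 2 / β) * ‖w - w'‖ ^ 2 := by
    have hnu : ‖u‖^2 = (1-β)^2 * ‖m₀ - c‖^2 := by
      rw [hu, norm_smul, Real.norm_eq_abs, mul_pow, sq_abs]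
    have htri : ‖m₀ - c‖ ≤ ‖m₀ - h w'‖ + C * ‖w - w'‖ := by
      have h1 : m₀ - c = (m₀ - h w') + (h w' - c) := by abel
      have h2 : ‖h w' - c‖ ≤ C * ‖w - w'‖ := by
        rw [hc]
        calc ‖h w' - h w‖ ≤ C * ‖w' - w‖ := hlip w' w
          _ = C * ‖w - w'‖ := by rw [norm_sub_rev]
      calc ‖m₀ - c‖ = ‖(m₀ - h w') + (h w' - c)‖ := by rw [← h1]
        _ ≤ ‖m₀ - h w'‖ + ‖h w' - c‖ := norm_add_le _ _
        _ ≤ ‖m₀ - h w'‖ + C * ‖w - w'‖ := by linarith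
    have hsq1 : (1-β)^2 * ‖m₀ - c‖^2 ≤ (1-β)^2 * (‖m₀ - h w'‖ + C * ‖w - w'‖)^2 := by
      apply mul_le_mul_of_nonneg_left _ (sq_nonneg _)
      exact pow_le_pow_left₀ (norm_nonneg _) htri 2
    have := scalar_aux β (‖m₀ - h w'‖) (C * ‖w - w'‖) hβ0 hβ1
    have hzz : (2 / β) * (C * ‖w - w'‖)^2 = (2 * C ^ 2 / β) * ‖w - w'‖ ^ 2 := by
      field_simp
    rw [hnu]
    calc (1-β)^2 * ‖m₀ - c‖^2 ≤ (1-β)^2 * (‖m₀ - h w'‖ + C * ‖w - w'‖)^2 := hsq1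
      _ ≤ (1 - β) * ‖m₀ - h w'‖^2 + (2/β) * (C * ‖w - w'‖)^2 := this
      _ = (1 - β) * ‖m₀ - h w'‖^2 + (2 * C ^ 2 / β) * ‖w - w'‖^2 := by rw [hzz]
  calc ∫ ω, ‖proj ((1 - β) • m₀ + β • X ω) - c‖ ^ 2 ∂μ
      ≤ ‖u‖^2 + β^2 * ∫ ω, ‖X ω - c‖^2 ∂μ := step1.trans step2.le
    _ ≤ (1 - β) * ‖m₀ - h w'‖ ^ 2 + β ^ 2 * ∫ ω, ‖X ω - c‖ ^ 2 ∂μ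
        + (2 * C ^ 2 / β) * ‖w - w'‖ ^ 2 := by linarith
end

section
/- Descent lemma for the momentum update (Lemma 4). Let F : ℝ^d → ℝ be differentiable with L_F-Lipschitz gradient, let η > 0 satisfy η L_F ≤ 1/2, and let w, m ∈ ℝ^d. Set w₊ = w − η m. Then F(w₊) ≤ F(w) + (η/2)‖∇F(w) − m‖² − (η/2)‖∇F(w)‖² − (η/4)‖m‖². -/
/-!
Along the segment from `x` to `x + v`, the function
`t ↦ F (x + t • v) - t ⟪∇F x, v⟫ - (L/2) t² ‖v‖²` has derivative
`⟪∇F (x + t • v) - ∇F x, v⟫ - L t ‖v‖² ≤ 0`, which gives the quadratic upper bound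
`F (x + v) ≤ F x + ⟪∇F x, v⟫ + (L/2) ‖v‖²`. For `v = -η m`, polarization rewrites
`-η ⟪∇F w, m⟫` as `(η/2)(‖∇F w - m‖² - ‖∇F w‖² - ‖m‖²)`, and `η L ≤ 1/2` bounds the
curvature term `(L/2) η² ‖m‖²` by `(η/4) ‖m‖²`.
-/

open InnerProductSpace RealInnerProductSpace

section Descent

variable {E : Type*} [NormedAddCommGroup E] [InnerProductSpace ℝ E] [CompleteSpace E]
  {F : E → ℝ}

theorem hasDerivAt_comp_add_smul (hF : Differentiable ℝ F) (x v : E) (t : ℝ) :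
    HasDerivAt (fun s : ℝ => F (x + s • v)) ⟪gradient F (x + t • v), v⟫ t := by
  have hline : HasDerivAt (fun s : ℝ => x + s • v) v t := by
    simpa using ((hasDerivAt_id t).smul_const v).const_add x
  simpa [Function.comp_def] using
    (hF _).hasGradientAt.hasFDerivAt.comp_hasDerivAt t hline

theorem image_add_le_of_norm_gradient_sub_le {L : ℝ} (hF : Differentiable ℝ F)
    (hL : ∀ x y, ‖gradient F x - gradient F y‖ ≤ L * ‖x - y‖) (x v : E) :
    F (x + v) ≤ F x + ⟪gradient F x, v⟫ + L / 2 * ‖v‖ ^ 2 := by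
  set φ : ℝ → ℝ := fun t => F (x + t • v) - t * ⟪gradient F x, v⟫ - L / 2 * ‖v‖ ^ 2 * t ^ 2
  have hφ' (t : ℝ) : HasDerivAt φ
      (⟪gradient F (x + t • v) - gradient F x, v⟫ - L * ‖v‖ ^ 2 * t) t := by
    have h := ((hasDerivAt_comp_add_smul hF x v t).sub
      ((hasDerivAt_id t).mul_const ⟪gradient F x, v⟫)).sub
      ((hasDerivAt_pow 2 t).const_mul (L / 2 * ‖v‖ ^ 2))
    refine h.congr_deriv ?_
    rw [inner_sub_left]
    push_cast
    ring
  have hφ'_nonpos {t : ℝ} (ht : 0 ≤ t) :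
      ⟪gradient F (x + t • v) - gradient F x, v⟫ - L * ‖v‖ ^ 2 * t ≤ 0 := by
    have hdist : ‖x + t • v - x‖ = t * ‖v‖ := by
      rw [add_sub_cancel_left, norm_smul, Real.norm_of_nonneg ht]
    have := calc ⟪gradient F (x + t • v) - gradient F x, v⟫
        ≤ ‖gradient F (x + t • v) - gradient F x‖ * ‖v‖ := real_inner_le_norm _ _
      _ ≤ L * ‖x + t • v - x‖ * ‖v‖ := by gcongr; exact hL _ _
      _ = L * ‖v‖ ^ 2 * t := by rw [hdist]; ring
    linarith
  have hanti : AntitoneOn φ (Set.Icc 0 1) := by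
    refine antitoneOn_of_hasDerivWithinAt_nonpos (convex_Icc 0 1)
      (fun t _ => (hφ' t).continuousAt.continuousWithinAt)
      (fun t _ => (hφ' t).hasDerivWithinAt) fun t ht => hφ'_nonpos ?_
    rw [interior_Icc] at ht
    exact ht.1.le
  have h10 : φ 1 ≤ φ 0 := hanti (by simp) (by simp) zero_le_one
  simp only [φ, one_smul, zero_smul, add_zero, one_mul, one_pow, mul_one, zero_mul,
    sub_zero, zero_pow two_ne_zero, mul_zero] at h10
  linarith

end Descent

/-- Descent lemma for the momentum update (Lemma 4). -/
theorem descent_lemma_momentum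
    (d : ℕ) (LF : ℝ)
    (F : EuclideanSpace ℝ (Fin d) → ℝ)
    (hFdiff : Differentiable ℝ F)
    (hFsmooth : ∀ x y, ‖gradient F x - gradient F y‖ ≤ LF * ‖x - y‖)
    (η : ℝ) (hη : 0 < η) (hηL : η * LF ≤ 1 / 2)
    (w m : EuclideanSpace ℝ (Fin d)) :
    F (w - η • m) ≤ F w + (η / 2) * ‖gradient F w - m‖ ^ 2
      - (η / 2) * ‖gradient F w‖ ^ 2 - (η / 4) * ‖m‖ ^ 2 := by
  have hdescent := image_add_le_of_norm_gradient_sub_le hFdiff hFsmooth w (-(η • m))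
  rw [← sub_eq_add_neg, inner_neg_right, real_inner_smul_right, norm_neg, norm_smul,
    Real.norm_of_nonneg hη.le] at hdescent
  have hcurv : LF / 2 * (η * ‖m‖) ^ 2 ≤ η / 4 * ‖m‖ ^ 2 := by
    nlinarith [mul_le_mul_of_nonneg_right hηL (by positivity : 0 ≤ η / 2 * ‖m‖ ^ 2)]
  rw [norm_sub_sq_real]
  linarith
end
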